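/- arXiv:2306.03294 — 3 statements merged into one kernel-verified Lean document; each statement's English description precedes it below -/
import Mathlib

section
/- Let n >= 1 be an integer, p a prime dividing n+1, and phi(x) in Z[x] a monic polynomial that is irreducible modulo p. Let a_0(x), ..., a_{n-1}(x) in Z[x] have degrees less than deg phi, and let a_n be an integer not divisible by p. Then the polynomial F(x) = a_n * phi(x)^n + sum_{j=0}^{n-1} ((n+1)!/(j+1)!) * a_j(x) * phi(x)^j has no non-constant factor in Z[x] of degree strictly less than deg phi. -/
open Polynomial

theorem no_small_factor_int (n : ℕ) (hn : 1 ≤ n) (p : ℕ) (hp : p.Prime)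
    (hpn : p ∣ n + 1) (φ : Polynomial ℤ) (hmonic : φ.Monic)
    (hirr : Irreducible (φ.map (Int.castRingHom (ZMod p))))
    (a : ℕ → Polynomial ℤ) (hdeg : ∀ j < n, (a j).degree < φ.degree)
    (an : ℤ) (han : ¬ ((p : ℤ) ∣ an)) :
    ¬ ∃ h : Polynomial ℤ,
        (∃ g : Polynomial ℤ,
          C an * φ ^ n +
            ∑ j ∈ Finset.range n,
              C (((n + 1).factorial / (j + 1).factorial : ℕ) : ℤ) * a j * φ ^ j
          = h * g) ∧
        0 < h.natDegree ∧ h.natDegree < φ.natDegree := by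
  haveI : Fact p.Prime := ⟨hp⟩
  rintro ⟨h, ⟨g, hF⟩, hh0, hhd⟩
  set d := φ.natDegree with hd
  have hφ0 : φ ≠ 0 := hmonic.ne_zero
  have han0 : an ≠ 0 := fun h0 => han (h0 ▸ dvd_zero _)
  set L := C an * φ ^ n with hL
  have hL0 : L ≠ 0 := mul_ne_zero (by simpa using han0) ((hmonic.pow n).ne_zero)
  have hLdeg : L.degree = ((n * d : ℕ) : WithBot ℕ) := by
    rw [degree_eq_natDegree hL0, hL, natDegree_C_mul han0, natDegree_pow]
  set S := ∑ j ∈ Finset.range n,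
      C (((n + 1).factorial / (j + 1).factorial : ℕ) : ℤ) * a j * φ ^ j with hS
  have hnd0 : 0 < n * d := Nat.mul_pos hn (lt_of_le_of_lt (Nat.zero_le _) hhd)
  have hSdeg : S.degree < L.degree := by
    rw [hLdeg]
    refine lt_of_le_of_lt (degree_sum_le _ _) ?_
    rw [Finset.sup_lt_iff (by exact_mod_cast WithBot.bot_lt_coe (n*d))]
    intro j hj
    rcases eq_or_ne (C (((n + 1).factorial / (j + 1).factorial : ℕ) : ℤ) * a j * φ ^ j) 0 with h0 | h0
    · rw [h0, degree_zero]; exact_mod_cast WithBot.bot_lt_coe (n*d)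
    · have haj0 : a j ≠ 0 := by
        intro hz
        apply h0
        rw [hz, mul_zero, zero_mul]
      have hj' : j < n := Finset.mem_range.mp hj
      have hajd : (a j).natDegree < d := by
        have := hdeg j hj'
        exact natDegree_lt_natDegree haj0 this
      calc (C (((n + 1).factorial / (j + 1).factorial : ℕ) : ℤ) * a j * φ ^ j).degree
          ≤ ((C (((n + 1).factorial / (j + 1).factorial : ℕ) : ℤ) * a j * φ ^ j).natDegree : WithBot ℕ) := degree_le_natDegree
        _ < ((n * d : ℕ) : WithBot ℕ) := by
            rw [Nat.cast_lt]
            calc (C (((n + 1).factorial / (j + 1).factorial : ℕ) : ℤ) * a j * φ ^ j).natDegree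
                ≤ (C (((n + 1).factorial / (j + 1).factorial : ℕ) : ℤ) * a j).natDegree + (φ ^ j).natDegree := natDegree_mul_le
              _ ≤ ((C (((n + 1).factorial / (j + 1).factorial : ℕ) : ℤ)).natDegree + (a j).natDegree) + (φ ^ j).natDegree := by
                  exact Nat.add_le_add_right natDegree_mul_le _
              _ = (a j).natDegree + j * d := by rw [natDegree_C, natDegree_pow, zero_add]
              _ < d + j * d := by omega
              _ = (j + 1) * d := by ring
              _ ≤ n * d := Nat.mul_le_mul_right d hj'
  have hFlc : (L + S).leadingCoeff = an := by
    rw [leadingCoeff_add_of_degree_lt' hSdeg, hL, leadingCoeff_mul, leadingCoeff_C,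
      (hmonic.pow n).leadingCoeff, mul_one]
  -- leading coefficient of h is not divisible by p
  have hlcmul : h.leadingCoeff * g.leadingCoeff = an := by
    rw [← leadingCoeff_mul, ← hF]
    exact hFlc
  have hlch : ¬ ((p : ℤ) ∣ h.leadingCoeff) := by
    intro hdvd
    exact han (hlcmul ▸ hdvd.mul_right _)
  -- reduce mod p
  set f := Int.castRingHom (ZMod p) with hf
  have hpdvd : ∀ j < n, p ∣ (n + 1).factorial / (j + 1).factorial := by
    intro j hj
    have h1 : (j + 1).factorial ∣ n.factorial :=
      Nat.factorial_dvd_factorial (by omega)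
    have h2 : (n + 1).factorial / (j + 1).factorial = (n + 1) * (n.factorial / (j + 1).factorial) := by
      rw [Nat.factorial_succ, Nat.mul_div_assoc _ h1]
    rw [h2]
    exact hpn.mul_right _
  have hmap : (h.map f) * (g.map f) = C ((an : ZMod p)) * (φ.map f) ^ n := by
    have := congrArg (Polynomial.map f) hF
    rw [Polynomial.map_add, Polynomial.map_mul, Polynomial.map_mul, Polynomial.map_pow,
      Polynomial.map_C, Polynomial.map_sum] at this
    rw [← this]
    have hz : ∀ j ∈ Finset.range n,
        ((C (((n + 1).factorial / (j + 1).factorial : ℕ) : ℤ) * a j * φ ^ j).map f) = 0 := by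
      intro j hj
      rw [Polynomial.map_mul, Polynomial.map_mul, Polynomial.map_C]
      have : f (((n + 1).factorial / (j + 1).factorial : ℕ) : ℤ) = 0 := by
        simp only [hf, Int.coe_castRingHom, Int.cast_natCast]
        exact (ZMod.natCast_eq_zero_iff _ _).mpr (hpdvd j (Finset.mem_range.mp hj))
      rw [this, map_zero, zero_mul, zero_mul]
    rw [Finset.sum_congr rfl hz, Finset.sum_const_zero, add_zero]
    simp [hf]
  -- degrees mod p
  have hhne0 : (h.map f).leadingCoeff ≠ 0 := by
    rw [leadingCoeff_map_of_leadingCoeff_ne_zero]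
    · intro hz
      exact hlch ((ZMod.intCast_zmod_eq_zero_iff_dvd _ _).mp hz)
    · intro hz
      exact hlch ((ZMod.intCast_zmod_eq_zero_iff_dvd _ _).mp hz)
  have hhdeg : (h.map f).natDegree = h.natDegree :=
    natDegree_map_of_leadingCoeff_ne_zero f (by
      intro hz
      exact hlch ((ZMod.intCast_zmod_eq_zero_iff_dvd _ _).mp hz))
  have han' : ((an : ZMod p)) ≠ 0 := by
    intro hz
    exact han ((ZMod.intCast_zmod_eq_zero_iff_dvd _ _).mp hz)
  have hCu : IsUnit (C ((an : ZMod p))) := isUnit_C.mpr han'.isUnit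
  have hdvd1 : (h.map f) ∣ C ((an : ZMod p)) * (φ.map f) ^ n := ⟨g.map f, hmap.symm⟩
  have hdvd2 : (h.map f) ∣ (φ.map f) ^ n := (hCu.dvd_mul_left).mp hdvd1
  have hhnu : ¬ IsUnit (h.map f) := by
    intro hu
    have := natDegree_eq_zero_of_isUnit hu
    omega
  have hhne : (h.map f) ≠ 0 := by
    intro hz
    rw [hz] at hhdeg
    simp at hhdeg
    omega
  obtain ⟨q, hqirr, hqdvd⟩ := WfDvdMonoid.exists_irreducible_factor hhnu hhne
  have hqprime : Prime q := hqirr.prime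
  have hqφ : q ∣ φ.map f := hqprime.dvd_of_dvd_pow (hqdvd.trans hdvd2)
  obtain ⟨c, hc⟩ := hqφ
  have hcu : IsUnit c := by
    rcases hirr.isUnit_or_isUnit hc with hu | hu
    · exact absurd hu hqirr.not_isUnit
    · exact hu
  have hqdeg : q.natDegree = d := by
    have hdc : c.natDegree = 0 := natDegree_eq_zero_of_isUnit hcu
    have : (φ.map f).natDegree = q.natDegree + c.natDegree := by
      rw [hc, natDegree_mul hqprime.ne_zero]
      intro hz
      exact hcu.ne_zero hz
    rw [hmonic.natDegree_map, hdc, add_zero] at this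
    exact this.symm
  have hle : q.natDegree ≤ (h.map f).natDegree := natDegree_le_of_dvd hqdvd hhne
  omega
end

section
/- Let n >= 1, p a prime dividing n+1, phi(x) in Z[x] monic and irreducible modulo p, a_0(x),...,a_{n-1}(x) in Z[x] of degree less than deg phi, and a_n an integer coprime to p. Then the rational polynomial f(x) = a_n * phi(x)^n/(n+1)! + sum_{j=0}^{n-1} a_j(x) * phi(x)^j/(j+1)! has no non-constant factor in Z[x] of degree less than deg phi. -/
/-!
Clearing denominators, `F = (n+1)! f` lies in `ℤ[X]`. Its leading coefficient is `a_n`, and it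
reduces modulo `p` to `a_n φ^n`, because `p ∣ n + 1` divides `(n+1)!/(j+1)!` for every `j < n`.
Since `p ∤ a_n`, reduction modulo `p` preserves the degree of every divisor of `F`. By Gauss's
lemma an integer factor `h` of `f` yields the divisor `primPart h` of `F`, whose reduction divides
the prime power `φ^n` in `𝔽_p[X]`, so `deg φ ∣ deg h`.
-/

open Polynomial Finset

namespace Polynomial

theorem natDegree_dvd_natDegree_of_dvd_prime_pow {R : Type*} [CommRing R] [IsDomain R]
    {ψ q : R[X]} (hψ : Prime ψ) {n : ℕ} (hq : q ∣ ψ ^ n) : ψ.natDegree ∣ q.natDegree := by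
  obtain ⟨i, -, hqi⟩ := (dvd_prime_pow hψ n).mp hq
  rw [natDegree_eq_of_degree_eq (degree_eq_degree_of_associated hqi), natDegree_pow]
  exact dvd_mul_left _ _

theorem natDegree_map_of_dvd_of_leadingCoeff_ne_zero {R S : Type*} [CommRing R] [NoZeroDivisors R]
    [Semiring S] (f : R →+* S) {F h : R[X]} (hh : h ∣ F) (hF : f F.leadingCoeff ≠ 0) :
    (h.map f).natDegree = h.natDegree := by
  obtain ⟨g, rfl⟩ := hh
  refine natDegree_map_of_leadingCoeff_ne_zero f fun hlc => hF ?_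
  rw [leadingCoeff_mul, map_mul, hlc, zero_mul]

theorem natDegree_dvd_natDegree_of_dvd_of_map_dvd_prime_pow {R S : Type*} [CommRing R]
    [IsDomain R] [CommRing S] [IsDomain S] (f : R →+* S) {F h : R[X]} {ψ : S[X]} (hψ : Prime ψ)
    {n : ℕ} (hF : F.map f ∣ ψ ^ n) (hlc : f F.leadingCoeff ≠ 0) (hh : h ∣ F) :
    ψ.natDegree ∣ h.natDegree := by
  rw [← natDegree_map_of_dvd_of_leadingCoeff_ne_zero f hh hlc]
  exact natDegree_dvd_natDegree_of_dvd_prime_pow hψ ((map_dvd f hh).trans hF)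

theorem degree_mul_pow_lt_degree_pow {R : Type*} [Semiring R] [Nontrivial R] {φ a : R[X]}
    (hφ : φ.Monic) (ha : a.degree < φ.degree) {j n : ℕ} (hjn : j < n) :
    (a * φ ^ j).degree < (φ ^ n).degree := by
  calc (a * φ ^ j).degree = a.degree + (φ ^ j).degree := (hφ.pow j).degree_mul
    _ < φ.degree + (φ ^ j).degree :=
        WithBot.add_lt_add_right (degree_ne_bot.mpr (hφ.pow j).ne_zero) ha
    _ = (φ ^ (j + 1)).degree := by rw [pow_succ', (hφ.pow j).degree_mul]
    _ ≤ (φ ^ n).degree := by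
        rw [degree_eq_natDegree (hφ.pow _).ne_zero, degree_eq_natDegree (hφ.pow _).ne_zero,
          hφ.natDegree_pow, hφ.natDegree_pow]
        exact_mod_cast Nat.mul_le_mul_right _ hjn

theorem leadingCoeff_C_mul_pow_add_sum {R : Type*} [CommRing R] [IsDomain R] {φ : R[X]}
    (hφ : φ.Monic) {c : R} (hc : c ≠ 0) {n : ℕ} (b : ℕ → R) (a : ℕ → R[X])
    (ha : ∀ j < n, (a j).degree < φ.degree) :
    (C c * φ ^ n + ∑ j ∈ range n, C (b j) * a j * φ ^ j).leadingCoeff = c := by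
  suffices (∑ j ∈ range n, C (b j) * a j * φ ^ j).degree < (C c * φ ^ n).degree by
    rw [leadingCoeff_add_of_degree_lt' this, leadingCoeff_mul, leadingCoeff_C,
      (hφ.pow n).leadingCoeff, mul_one]
  rw [degree_C_mul hc]
  refine (degree_sum_le _ _).trans_lt ((Finset.sup_lt_iff ?_).mpr fun j hj => ?_)
  · exact bot_lt_iff_ne_bot.mpr (degree_ne_bot.mpr (hφ.pow n).ne_zero)
  · rw [mul_assoc, ← smul_eq_C_mul]
    exact (degree_smul_le _ _).trans_lt
      (degree_mul_pow_lt_degree_pow hφ (ha j (mem_range.mp hj)) (mem_range.mp hj))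

end Polynomial

theorem Nat.succ_dvd_factorial_div_factorial {j n : ℕ} (hjn : j < n) :
    n + 1 ∣ (n + 1).factorial / (j + 1).factorial := by
  rw [Nat.factorial_succ, Nat.mul_div_assoc _ (Nat.factorial_dvd_factorial hjn)]
  exact dvd_mul_right _ _

theorem ZMod.intCast_ne_zero_of_isCoprime {p : ℕ} (hp : p.Prime) {a : ℤ} (ha : IsCoprime a p) :
    (a : ZMod p) ≠ 0 := by
  rw [Ne, ZMod.intCast_zmod_eq_zero_iff_dvd]
  exact fun hpa => (Nat.prime_iff_prime_int.mp hp).not_isUnit (ha.isUnit_of_dvd' hpa dvd_rfl)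

noncomputable def factorialScaled (n : ℕ) (φ : ℤ[X]) (a : ℕ → ℤ[X]) (an : ℤ) : ℤ[X] :=
  C an * φ ^ n + ∑ j ∈ range n, C (((n + 1).factorial / (j + 1).factorial : ℕ) : ℤ) * a j * φ ^ j

theorem map_factorialScaled_rat (n : ℕ) (φ : ℤ[X]) (a : ℕ → ℤ[X]) (an : ℤ) :
    (factorialScaled n φ a an).map (Int.castRingHom ℚ) =
      C ((n + 1).factorial : ℚ) *
        (C ((an : ℚ) / (n + 1).factorial) * (φ.map (Int.castRingHom ℚ)) ^ n +
          ∑ j ∈ range n, C ((1 : ℚ) / (j + 1).factorial) * ((a j).map (Int.castRingHom ℚ)) *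
            (φ.map (Int.castRingHom ℚ)) ^ j) := by
  have hN : ((n + 1).factorial : ℚ) ≠ 0 := by positivity
  simp only [factorialScaled, Polynomial.map_add, Polynomial.map_mul, Polynomial.map_pow,
    Polynomial.map_sum, map_C, mul_add, Finset.mul_sum, ← mul_assoc, ← C_mul]
  refine congrArg₂ (· + ·) ?_ (Finset.sum_congr rfl fun j hj => ?_)
  · rw [mul_div_cancel₀ _ hN, eq_intCast]
  · have hdvd := Nat.factorial_dvd_factorial (Nat.succ_le_succ (mem_range.mp hj).le)
    rw [eq_intCast, Int.cast_natCast, Nat.cast_div hdvd (by positivity), mul_one_div]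

theorem map_factorialScaled_zmod {n p : ℕ} (hpn : p ∣ n + 1) (φ : ℤ[X]) (a : ℕ → ℤ[X]) (an : ℤ) :
    (factorialScaled n φ a an).map (Int.castRingHom (ZMod p)) =
      C (an : ZMod p) * (φ.map (Int.castRingHom (ZMod p))) ^ n := by
  have hsum : ∀ j ∈ range n,
      (C (((n + 1).factorial / (j + 1).factorial : ℕ) : ℤ) * a j * φ ^ j).map
        (Int.castRingHom (ZMod p)) = 0 := fun j hj => by
    have hp : ((((n + 1).factorial / (j + 1).factorial : ℕ) : ℤ) : ZMod p) = 0 := by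
      rw [Int.cast_natCast, ZMod.natCast_eq_zero_iff]
      exact hpn.trans (Nat.succ_dvd_factorial_div_factorial (mem_range.mp hj))
    rw [Polynomial.map_mul, Polynomial.map_mul, map_C, eq_intCast, hp, C_0, zero_mul, zero_mul]
  rw [factorialScaled, Polynomial.map_add, Polynomial.map_sum, Finset.sum_eq_zero hsum, add_zero,
    Polynomial.map_mul, map_C, Polynomial.map_pow, eq_intCast]

theorem no_small_factor_rat_general (n : ℕ) (p : ℕ) (hp : p.Prime)
    (hpn : p ∣ n + 1) (φ : Polynomial ℤ) (hmonic : φ.Monic)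
    (hirr : Irreducible (φ.map (Int.castRingHom (ZMod p))))
    (a : ℕ → Polynomial ℤ) (hdeg : ∀ j < n, (a j).degree < φ.degree)
    (an : ℤ) (han : IsCoprime (an : ℤ) (p : ℤ)) :
    ¬ ∃ h : Polynomial ℤ,
        0 < h.natDegree ∧ h.natDegree < φ.natDegree ∧
        ∃ g : Polynomial ℚ,
          C ((an : ℚ) / (n + 1).factorial) * (φ.map (Int.castRingHom ℚ)) ^ n +
            ∑ j ∈ Finset.range n,
              C ((1 : ℚ) / (j + 1).factorial) * ((a j).map (Int.castRingHom ℚ)) *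
                (φ.map (Int.castRingHom ℚ)) ^ j
          = (h.map (Int.castRingHom ℚ)) * g := by
  rintro ⟨h, hpos, hlt, g, hfg⟩
  have : Fact p.Prime := ⟨hp⟩
  set F := factorialScaled n φ a an
  have hanp := ZMod.intCast_ne_zero_of_isCoprime hp han
  have hlc : F.leadingCoeff = an :=
    leadingCoeff_C_mul_pow_add_sum hmonic (fun h0 => hanp (by simp [h0])) _ a hdeg
  have hdvdZ : h.primPart ∣ F := by
    rw [IsPrimitive.Int.dvd_iff_map_cast_dvd_map_cast _ _ h.isPrimitive_primPart,
      map_factorialScaled_rat, hfg]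
    exact (Polynomial.map_dvd _ h.primPart_dvd).trans (Dvd.intro g rfl) |>.mul_left _
  have hFp : F.map (Int.castRingHom (ZMod p)) ∣ (φ.map (Int.castRingHom (ZMod p))) ^ n := by
    rw [map_factorialScaled_zmod hpn]
    exact (isUnit_C.mpr (Ne.isUnit hanp)).mul_left_dvd.mpr dvd_rfl
  have hdvd := natDegree_dvd_natDegree_of_dvd_of_map_dvd_prime_pow _ hirr.prime hFp
    (by rwa [hlc, eq_intCast]) hdvdZ
  rw [natDegree_primPart, hmonic.natDegree_map] at hdvd
  exact hpos.ne' (Nat.eq_zero_of_dvd_of_lt hdvd hlt)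

theorem no_small_factor_rat (n : ℕ) (hn : 1 ≤ n) (p : ℕ) (hp : p.Prime)
    (hpn : p ∣ n + 1) (φ : Polynomial ℤ) (hmonic : φ.Monic)
    (hirr : Irreducible (φ.map (Int.castRingHom (ZMod p))))
    (a : ℕ → Polynomial ℤ) (hdeg : ∀ j < n, (a j).degree < φ.degree)
    (an : ℤ) (han : IsCoprime (an : ℤ) (p : ℤ)) :
    ¬ ∃ h : Polynomial ℤ,
        0 < h.natDegree ∧ h.natDegree < φ.natDegree ∧
        ∃ g : Polynomial ℚ,
          C ((an : ℚ) / (n + 1).factorial) * (φ.map (Int.castRingHom ℚ)) ^ n +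
            ∑ j ∈ Finset.range n,
              C ((1 : ℚ) / (j + 1).factorial) * ((a j).map (Int.castRingHom ℚ)) *
                (φ.map (Int.castRingHom ℚ)) ^ j
          = (h.map (Int.castRingHom ℚ)) * g :=
  no_small_factor_rat_general n p hp hpn φ hmonic hirr a hdeg an han
end

section
/- Let phi(x) in Z[x] be monic and irreducible modulo all primes <= n+1, and let a_0(x), ..., a_n(x) in Z[x] each have degree less than deg phi, with the content of a_0(x) not divisible by any prime <= n+1. Set f(x) = sum_{j=0}^{n} a_j(x) * phi(x)^j/(j+1)!. Suppose k is a positive integer with k <= n/2 and there exists a prime p >= k+2 dividing (n+1)*n*(n-1)*...*(n-k+2) such that p does not divide the leading coefficient of a_n(x). Then f(x) has no factor in Z[x] whose degree lies in the interval [k*deg phi, (k+1)*deg phi). -/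
/-!
Write `F = (n + 1)! f = ∑ c_j a_j φ ^ j` with `c_j = (n + 1)! / (j + 1)!`, an integer polynomial.
If `h` divides `f` with `k d ≤ deg h < (k + 1) d` (`d = deg φ`), then by Gauss's lemma its primitive
part `H` divides `F`, say `F = H G`.

Measure a polynomial `P = ∑ b_r φ ^ r` (`deg b_r < d`) by the weights `k v_p(b_r) + r`, i.e. by its
`φ`-Newton polygon against lines of slope `-1/k`. As `φ` is irreducible mod `p`, the last index
where this weight is minimal is additive under multiplication. For `F` it is `0`, because
`k v_p((j + 1)!) < j` when `p ≥ k + 2`; hence it is `0` for `H` as well.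

On the other hand `p ∣ m` for some `m ≥ n + 2 - k`, so `p` divides every `c_j` with `j < m - 1`
and `φ ^ (m - 1)` divides `F` mod `p`. The cofactor `G` has degree `< (m - 1) d`, so `φ` divides
`H` mod `p` and the weight of `H` at `0` is at least `k`. But `deg H / d = k` and the leading
coefficient of `H` is prime to `p`, so the weight of `H` at `k > 0` is exactly `k`: a contradiction.
-/

open Polynomial Finset

namespace Polynomial

variable {R : Type*} [CommRing R]

theorem add_divByMonic (p₁ p₂ q : R[X]) : (p₁ + p₂) /ₘ q = p₁ /ₘ q + p₂ /ₘ q := by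
  by_cases hq : q.Monic
  · nontriviality R
    refine (div_modByMonic_unique _ (p₁ %ₘ q + p₂ %ₘ q) hq ⟨?_, ?_⟩).1
    · linear_combination modByMonic_add_div p₁ q + modByMonic_add_div p₂ q
    · exact (degree_add_le _ _).trans_lt
        (max_lt (degree_modByMonic_lt _ hq) (degree_modByMonic_lt _ hq))
  · simp [divByMonic_eq_of_not_monic _ hq]

theorem smul_divByMonic (c : R) (p q : R[X]) : c • p /ₘ q = c • (p /ₘ q) := by
  by_cases hq : q.Monic
  · nontriviality R
    refine (div_modByMonic_unique _ (c • (p %ₘ q)) hq ⟨?_, ?_⟩).1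
    · rw [mul_smul_comm, ← smul_add, modByMonic_add_div]
    · exact (degree_smul_le _ _).trans_lt (degree_modByMonic_lt _ hq)
  · simp [divByMonic_eq_of_not_monic _ hq]

@[simps]
noncomputable def divByMonicHom (q : R[X]) : R[X] →ₗ[R] R[X] where
  toFun p := p /ₘ q
  map_add' p₁ p₂ := add_divByMonic p₁ p₂ q
  map_smul' c p := smul_divByMonic c p q

theorem divByMonic_divByMonic (p : R[X]) {q r : R[X]} (hq : q.Monic) (hr : r.Monic) :
    p /ₘ q /ₘ r = p /ₘ (q * r) := by
  nontriviality R
  refine (div_modByMonic_unique _ (p %ₘ q + q * (p /ₘ q %ₘ r)) (hq.mul hr) ⟨?_, ?_⟩).1.symm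
  · linear_combination modByMonic_add_div p q + q * modByMonic_add_div (p /ₘ q) r
  · rw [hr.degree_mul]
    refine (degree_add_le _ _).trans_lt (max_lt ?_ ?_)
    · exact (degree_modByMonic_lt _ hq).trans_le
        (le_add_of_nonneg_right (zero_le_degree_iff.2 hr.ne_zero))
    · rw [mul_comm, hq.degree_mul, add_comm]
      exact WithBot.add_lt_add_left (degree_eq_bot.not.2 hq.ne_zero)
        (degree_modByMonic_lt _ hr)

theorem not_C_dvd_of_not_dvd_leadingCoeff {c : R} {P : R[X]} (h : ¬ c ∣ P.leadingCoeff) :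
    ¬ C c ∣ P :=
  fun hc => h ((C_dvd_iff_dvd_coeff c P).1 hc _)

theorem dvd_of_pow_dvd_mul_of_natDegree_lt [IsDomain R] {π H G : R[X]} (hπ : Prime π) {e : ℕ}
    (h : π ^ e ∣ H * G) (hG : G ≠ 0) (hdeg : G.natDegree < e * π.natDegree) : π ∣ H := by
  by_contra hH
  have := natDegree_le_of_dvd (hπ.pow_dvd_of_dvd_mul_left e hH h) hG
  rw [natDegree_pow] at this
  omega

/-- The coefficients of the `φ`-adic expansion `P = ∑ r, phiCoeff φ r P * φ ^ r`. -/
noncomputable def phiCoeff (φ : R[X]) (r : ℕ) : R[X] →ₗ[R] R[X] :=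
  (modByMonicHom φ).comp (divByMonicHom (φ ^ r))

section PhiCoeff

variable {φ : R[X]}

theorem phiCoeff_apply (r : ℕ) (P : R[X]) : phiCoeff φ r P = P /ₘ φ ^ r %ₘ φ := rfl

theorem degree_phiCoeff_lt [Nontrivial R] (hφ : φ.Monic) (r : ℕ) (P : R[X]) :
    (phiCoeff φ r P).degree < φ.degree :=
  degree_modByMonic_lt _ hφ

theorem phiCoeff_succ (hφ : φ.Monic) (r : ℕ) (P : R[X]) :
    phiCoeff φ (r + 1) P = phiCoeff φ r (P /ₘ φ) := by
  rw [phiCoeff_apply, phiCoeff_apply, pow_succ', divByMonic_divByMonic _ hφ (hφ.pow r)]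

theorem phiCoeff_eq_zero_of_degree_lt (hφ : φ.Monic) {r : ℕ} {P : R[X]}
    (h : P.degree < (φ ^ r).degree) : phiCoeff φ r P = 0 := by
  nontriviality R
  rw [phiCoeff_apply, (divByMonic_eq_zero_iff (hφ.pow r)).2 h, zero_modByMonic]

theorem sum_phiCoeff_mul_pow (hφ : φ.Monic) {N : ℕ} {P : R[X]}
    (hP : P.degree < (φ ^ N).degree) : ∑ r ∈ range N, phiCoeff φ r P * φ ^ r = P := by
  nontriviality R
  induction N generalizing P with
  | zero =>
    rw [pow_zero, degree_one, Nat.WithBot.lt_zero_iff, degree_eq_bot] at hP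
    simp [hP]
  | succ N ih =>
    have hQ : (P /ₘ φ).degree < (φ ^ N).degree := by
      rw [← divByMonic_eq_zero_iff (hφ.pow N), divByMonic_divByMonic _ hφ (hφ.pow N),
        ← pow_succ', divByMonic_eq_zero_iff (hφ.pow _)]
      exact hP
    conv_rhs => rw [← modByMonic_add_div P φ, ← ih hQ, mul_sum]
    rw [sum_range_succ', add_comm, phiCoeff_apply 0, pow_zero, divByMonic_one, mul_one]
    exact congrArg _ (sum_congr rfl fun r _ => by rw [phiCoeff_succ hφ, pow_succ']; ring)

theorem mul_eq_sum_phiCoeff (hφ : φ.Monic) {N : ℕ} {P Q : R[X]}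
    (hP : P.degree < (φ ^ N).degree) (hQ : Q.degree < (φ ^ N).degree) :
    P * Q = ∑ x ∈ range N ×ˢ range N,
      phiCoeff φ x.1 P * phiCoeff φ x.2 Q * φ ^ (x.1 + x.2) := by
  conv_lhs => rw [← sum_phiCoeff_mul_pow hφ hP, ← sum_phiCoeff_mul_pow hφ hQ]
  rw [sum_mul_sum, sum_product]
  exact sum_congr rfl fun r _ => sum_congr rfl fun s _ => by ring

theorem phiCoeff_mul_pow_of_lt (hφ : φ.Monic) {r i : ℕ} (h : r < i) (B : R[X]) :
    phiCoeff φ r (B * φ ^ i) = 0 := by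
  obtain ⟨l, rfl⟩ := Nat.exists_eq_add_of_lt h
  rw [phiCoeff_apply, show B * φ ^ (r + l + 1) = φ ^ r * (φ * (B * φ ^ l)) by ring,
    mul_divByMonic_cancel_left _ (hφ.pow r), modByMonic_eq_zero_iff_dvd hφ]
  exact dvd_mul_right _ _

theorem phiCoeff_add_mul_pow (hφ : φ.Monic) (r i : ℕ) (B : R[X]) :
    phiCoeff φ (r + i) (B * φ ^ i) = phiCoeff φ r B := by
  rw [phiCoeff_apply, phiCoeff_apply, pow_add, mul_comm (φ ^ r), ← divByMonic_divByMonic _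
    (hφ.pow i) (hφ.pow r), mul_comm, mul_divByMonic_cancel_left _ (hφ.pow i)]

theorem phiCoeff_mul_pow_of_degree_lt (hφ : φ.Monic) {B : R[X]} (hB : B.degree < φ.degree)
    (r i : ℕ) : phiCoeff φ r (B * φ ^ i) = if r = i then B else 0 := by
  nontriviality R
  rcases lt_or_ge r i with h | h
  · rw [phiCoeff_mul_pow_of_lt hφ h, if_neg h.ne]
  obtain ⟨l, rfl⟩ := Nat.exists_eq_add_of_le' h
  rw [phiCoeff_add_mul_pow hφ]
  rcases Nat.eq_zero_or_pos l with rfl | hl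
  · rw [if_pos (zero_add i), phiCoeff_apply, pow_zero, divByMonic_one,
      (modByMonic_eq_self_iff hφ).2 hB]
  · rw [if_neg (by omega)]
    obtain ⟨m, rfl⟩ := Nat.exists_eq_add_of_lt hl
    refine phiCoeff_eq_zero_of_degree_lt hφ (hB.trans_le ?_)
    rw [zero_add, pow_succ, hφ.degree_mul]
    exact le_add_of_nonneg_left (zero_le_degree_iff.2 (hφ.pow m).ne_zero)

theorem phiCoeff_sum_mul_pow (hφ : φ.Monic) {s : Finset ℕ} {B : ℕ → R[X]}
    (hB : ∀ i ∈ s, (B i).degree < φ.degree) (r : ℕ) :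
    phiCoeff φ r (∑ i ∈ s, B i * φ ^ i) = if r ∈ s then B r else 0 := by
  rw [map_sum, sum_congr rfl fun i hi => phiCoeff_mul_pow_of_degree_lt hφ (hB i hi) r i,
    sum_ite_eq]

theorem phiCoeff_natDegree_div (hφ : φ.Monic) (hd : 0 < φ.natDegree) (P : R[X]) :
    phiCoeff φ (P.natDegree / φ.natDegree) P = P /ₘ φ ^ (P.natDegree / φ.natDegree) := by
  nontriviality R
  rw [phiCoeff_apply]
  refine (modByMonic_eq_self_iff hφ).2 (degree_lt_degree ?_)
  rw [natDegree_divByMonic _ (hφ.pow _), hφ.natDegree_pow, mul_comm]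
  have := Nat.div_add_mod P.natDegree φ.natDegree
  have := Nat.mod_lt P.natDegree hd
  omega

theorem leadingCoeff_phiCoeff_natDegree_div (hφ : φ.Monic) (hd : 0 < φ.natDegree) (P : R[X]) :
    (phiCoeff φ (P.natDegree / φ.natDegree) P).leadingCoeff = P.leadingCoeff := by
  rcases eq_or_ne P 0 with rfl | hP
  · simp
  have := nontrivial_iff.1 (nontrivial_of_ne P 0 hP)
  rw [phiCoeff_natDegree_div hφ hd]
  refine leadingCoeff_divByMonic_of_monic (hφ.pow _) ?_
  rw [degree_eq_natDegree hP, degree_eq_natDegree (hφ.pow _).ne_zero, hφ.natDegree_pow]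
  exact_mod_cast Nat.div_mul_le_self _ _

theorem natDegree_div_eq_of_phiCoeff (hφ : φ.Monic) (hd : 0 < φ.natDegree) {P : R[X]} {N : ℕ}
    (hN : phiCoeff φ N P ≠ 0) (hlast : ∀ r, N < r → phiCoeff φ r P = 0) :
    P.natDegree / φ.natDegree = N := by
  have hP : P ≠ 0 := by rintro rfl; exact hN (map_zero _)
  have := nontrivial_iff.1 (nontrivial_of_ne P 0 hP)
  refine le_antisymm (not_lt.1 fun h => ?_) (not_lt.1 fun h => hN ?_)
  · have := leadingCoeff_phiCoeff_natDegree_div hφ hd P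
    rw [hlast _ h, leadingCoeff_zero] at this
    exact hP (leadingCoeff_eq_zero.1 this.symm)
  · refine phiCoeff_eq_zero_of_degree_lt hφ (degree_lt_degree ?_)
    rw [hφ.natDegree_pow]
    have := Nat.div_add_mod P.natDegree φ.natDegree
    have := Nat.mod_lt P.natDegree hd
    have := Nat.mul_le_mul_right φ.natDegree h
    rw [Nat.succ_mul] at this
    nlinarith

theorem emultiplicity_C_le_phiCoeff (c : R) (r : ℕ) (P : R[X]) :
    emultiplicity (C c) P ≤ emultiplicity (C c) (phiCoeff φ r P) := by
  refine emultiplicity_le_emultiplicity_iff.2 fun n ⟨Q, hQ⟩ => ⟨phiCoeff φ r Q, ?_⟩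
  rw [hQ, ← C_pow, C_mul', map_smul, C_mul']

end PhiCoeff

theorem C_dvd_iff_zmod (n : ℕ) (P : ℤ[X]) :
    C (n : ℤ) ∣ P ↔ P.map (Int.castRingHom (ZMod n)) = 0 := by
  rw [C_dvd_iff_dvd_coeff]
  simp only [Polynomial.ext_iff, coeff_map, coeff_zero, eq_intCast,
    ZMod.intCast_zmod_eq_zero_iff_dvd]

theorem prime_C_natCast (p : ℕ) [Fact p.Prime] : Prime (C (p : ℤ)) :=
  prime_C_iff.2 (Nat.prime_iff_prime_int.1 Fact.out)

theorem emultiplicity_C_natCast (p : ℕ) [Fact p.Prime] {c : ℕ} (hc : c ≠ 0) :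
    emultiplicity (C (p : ℤ)) (C (c : ℤ)) = padicValNat p c := by
  rw [padicValNat_eq_emultiplicity hc, ← Int.natCast_emultiplicity]
  refine emultiplicity_eq_emultiplicity_iff.2 fun m => ?_
  rw [← C_pow, C_dvd_iff_dvd_coeff]
  refine ⟨fun h => by simpa using h 0, fun h i => ?_⟩
  rw [coeff_C]
  split_ifs
  · exact h
  · exact dvd_zero _

section Reduction

variable {p : ℕ} [Fact p.Prime] {φ : ℤ[X]}

theorem not_C_dvd_modByMonic_mul (hφ : φ.Monic)
    (hirr : Irreducible (φ.map (Int.castRingHom (ZMod p)))) {B E : ℤ[X]}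
    (hB : B.degree < φ.degree) (hE : E.degree < φ.degree)
    (hpB : ¬ C (p : ℤ) ∣ B) (hpE : ¬ C (p : ℤ) ∣ E) : ¬ C (p : ℤ) ∣ B * E %ₘ φ := by
  have hlt {A : ℤ[X]} (hA : A.degree < φ.degree) (hpA : ¬ C (p : ℤ) ∣ A) :
      ¬ φ.map (Int.castRingHom (ZMod p)) ∣ A.map (Int.castRingHom (ZMod p)) :=
    not_dvd_of_degree_lt (mt (C_dvd_iff_zmod p A).2 hpA)
      (degree_map_le.trans_lt (by rwa [hφ.degree_map]))
  rw [C_dvd_iff_zmod, map_modByMonic _ hφ, modByMonic_eq_zero_iff_dvd (hφ.map _),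
    Polynomial.map_mul]
  exact fun h => (hirr.prime.dvd_or_dvd h).elim (hlt hB hpB) (hlt hE hpE)

theorem emultiplicity_modByMonic_mul (hφ : φ.Monic)
    (hirr : Irreducible (φ.map (Int.castRingHom (ZMod p)))) {B E : ℤ[X]}
    (hB : B.degree < φ.degree) (hE : E.degree < φ.degree) :
    emultiplicity (C (p : ℤ)) (B * E %ₘ φ) =
      emultiplicity (C (p : ℤ)) B + emultiplicity (C (p : ℤ)) E := by
  have hπ := prime_C_natCast p
  rcases eq_or_ne B 0 with rfl | hB0
  · simp [emultiplicity_zero]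
  rcases eq_or_ne E 0 with rfl | hE0
  · simp [emultiplicity_zero]
  obtain ⟨a, B₀, hB₀, rfl⟩ := WfDvdMonoid.max_power_factor' hB0 hπ.not_isUnit
  obtain ⟨b, E₀, hE₀, rfl⟩ := WfDvdMonoid.max_power_factor' hE0 hπ.not_isUnit
  have hdeg (m : ℕ) (A : ℤ[X]) : (C (p : ℤ) ^ m * A).degree = A.degree := by
    rw [← C_pow, degree_C_mul (pow_ne_zero _ (by exact_mod_cast (Fact.out : p.Prime).ne_zero))]
  rw [hdeg] at hB hE
  have hsplit : C (p : ℤ) ^ a * B₀ * (C (p : ℤ) ^ b * E₀) %ₘ φ =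
      C (p : ℤ) ^ (a + b) * (B₀ * E₀ %ₘ φ) := by
    rw [show C (p : ℤ) ^ a * B₀ * (C (p : ℤ) ^ b * E₀) = C (p : ℤ) ^ (a + b) * (B₀ * E₀) by ring,
      ← C_pow, C_mul', smul_modByMonic, C_mul']
  simp only [hsplit, emultiplicity_mul hπ, emultiplicity_pow_self_of_prime hπ,
    emultiplicity_eq_zero.2 hB₀, emultiplicity_eq_zero.2 hE₀,
    emultiplicity_eq_zero.2 (not_C_dvd_modByMonic_mul hφ hirr hB hE hB₀ hE₀)]
  push_cast
  ring

end Reduction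

end Polynomial

def IsLastMinimum (f : ℕ → ℕ∞) (r₀ : ℕ) : Prop :=
  (∀ r, f r₀ ≤ f r) ∧ ∀ r, r₀ < r → f r₀ < f r

theorem IsLastMinimum.unique {f : ℕ → ℕ∞} {r₁ r₂ : ℕ} (h₁ : IsLastMinimum f r₁)
    (h₂ : IsLastMinimum f r₂) : r₁ = r₂ :=
  le_antisymm (not_lt.1 fun h => (h₂.2 _ h).not_ge (h₁.1 r₂))
    (not_lt.1 fun h => (h₁.2 _ h).not_ge (h₂.1 r₁))

theorem exists_isLastMinimum {f : ℕ → ℕ∞} (hf : ∀ r : ℕ, (r : ℕ∞) ≤ f r) {r₁ : ℕ}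
    (h : f r₁ ≠ ⊤) : ∃ r₀, IsLastMinimum f r₀ := by
  set m := f (Function.argmin f)
  have hm : (m.toNat : ℕ∞) = m :=
    ENat.natCast_toNat (ne_top_of_le_ne_top h (Function.argmin_le f r₁))
  have hargmin : Function.argmin f ≤ m.toNat := by exact_mod_cast (hf _).trans hm.ge
  have hspec : f (Nat.findGreatest (fun r => f r = m) m.toNat) = m :=
    Nat.findGreatest_spec (P := fun r => f r = m) hargmin rfl
  refine ⟨Nat.findGreatest (fun r => f r = m) m.toNat, fun r => ?_, fun r hr => ?_⟩
  · rw [hspec]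
    exact Function.argmin_le f r
  rw [hspec]
  refine lt_of_le_of_ne (Function.argmin_le f r) fun hr' => ?_
  by_cases hle : r ≤ m.toNat
  · exact Nat.findGreatest_is_greatest hr hle hr'.symm
  · have : (m.toNat : ℕ∞) < r := by exact_mod_cast not_le.1 hle
    exact (hf r).not_gt (by rwa [← hr', ← hm])

namespace Polynomial

/-- `k` times the intercept on the axis `r = 0` of the line of slope `-1/k` through the point
`(r, v_p(b_r))` of the `φ`-Newton polygon of `P = ∑ b_r φ ^ r`: it is minimal exactly at the points
on the supporting line of slope `-1/k`. -/
noncomputable def phiWeight (p k : ℕ) (φ P : ℤ[X]) (r : ℕ) : ℕ∞ :=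
  k * emultiplicity (C (p : ℤ)) (phiCoeff φ r P) + r

section PhiWeight

variable {p k : ℕ} {φ : ℤ[X]}

theorem phiWeight_eq_top (hk : k ≠ 0) {P : ℤ[X]} {r : ℕ} (h : phiCoeff φ r P = 0) :
    phiWeight p k φ P r = ⊤ := by
  rw [phiWeight, h, emultiplicity_zero, ENat.mul_top (by exact_mod_cast hk), top_add]

theorem min_phiWeight_le_phiWeight_add (P Q : ℤ[X]) (r : ℕ) :
    min (phiWeight p k φ P r) (phiWeight p k φ Q r) ≤ phiWeight p k φ (P + Q) r := by
  have hmono : Monotone fun x : ℕ∞ => (k : ℕ∞) * x + r := fun _ _ h => by dsimp only; gcongr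
  simpa only [phiWeight, map_add, ← hmono.map_min] using hmono min_le_emultiplicity_add

theorem le_phiWeight_sum (hk : k ≠ 0) {ι : Type*} (s : Finset ι) (f : ι → ℤ[X]) {w : ℕ∞}
    {r : ℕ} (h : ∀ i ∈ s, w ≤ phiWeight p k φ (f i) r) :
    w ≤ phiWeight p k φ (∑ i ∈ s, f i) r :=
  sum_induction f (fun P => w ≤ phiWeight p k φ P r)
    (fun P Q hP hQ => (le_min hP hQ).trans (min_phiWeight_le_phiWeight_add P Q r))
    (by rw [phiWeight_eq_top hk (map_zero _)]; exact le_top) h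

theorem phiWeight_add_of_lt {P Q : ℤ[X]} {r : ℕ}
    (h : phiWeight p k φ P r < phiWeight p k φ Q r) :
    phiWeight p k φ (P + Q) r = phiWeight p k φ P r := by
  have hlt : emultiplicity (C (p : ℤ)) (phiCoeff φ r P) <
      emultiplicity (C (p : ℤ)) (phiCoeff φ r Q) := by
    contrapose! h
    unfold phiWeight
    gcongr
  rw [phiWeight, map_add, add_comm (phiCoeff φ r P), emultiplicity_add_of_gt hlt, phiWeight]

theorem phiWeight_le_phiWeight_zero (hφ : φ.Monic) (hd : 0 < φ.natDegree) {P : ℤ[X]}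
    (hkP : k * φ.natDegree ≤ P.natDegree) (hPk : P.natDegree < (k + 1) * φ.natDegree)
    (hφP : φ.map (Int.castRingHom (ZMod p)) ∣ P.map (Int.castRingHom (ZMod p)))
    (hlead : ¬ (p : ℤ) ∣ P.leadingCoeff) :
    phiWeight p k φ P k ≤ phiWeight p k φ P 0 := by
  have htop : emultiplicity (C (p : ℤ)) (phiCoeff φ k P) = 0 := by
    rw [emultiplicity_eq_zero, ← Nat.div_eq_of_lt_le hkP hPk]
    refine not_C_dvd_of_not_dvd_leadingCoeff ?_
    rwa [leadingCoeff_phiCoeff_natDegree_div hφ hd]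
  have hbot : 1 ≤ emultiplicity (C (p : ℤ)) (phiCoeff φ 0 P) := by
    rw [Order.one_le_iff_ne_zero, Ne, emultiplicity_eq_zero, not_not, C_dvd_iff_zmod,
      phiCoeff_apply, pow_zero, divByMonic_one, map_modByMonic _ hφ,
      modByMonic_eq_zero_iff_dvd (hφ.map _)]
    exact hφP
  unfold phiWeight
  rw [htop, mul_zero, zero_add, Nat.cast_zero, add_zero]
  calc (k : ℕ∞) = k * 1 := (mul_one _).symm
    _ ≤ _ := by gcongr

variable [Fact p.Prime]

theorem phiWeight_add_le_phiWeight_mul_mul_pow (hk : k ≠ 0) (hφ : φ.Monic) (P Q : ℤ[X])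
    (r s t : ℕ) :
    phiWeight p k φ P r + phiWeight p k φ Q s + (t - (r + s) : ℕ) ≤
      phiWeight p k φ (phiCoeff φ r P * phiCoeff φ s Q * φ ^ (r + s)) t := by
  rcases lt_or_ge t (r + s) with ht | ht
  · rw [phiWeight_eq_top hk (phiCoeff_mul_pow_of_lt hφ ht _)]
    exact le_top
  obtain ⟨l, rfl⟩ := Nat.exists_eq_add_of_le' ht
  unfold phiWeight
  rw [phiCoeff_add_mul_pow hφ, Nat.add_sub_cancel]
  calc _ = (k : ℕ∞) * emultiplicity (C (p : ℤ)) (phiCoeff φ r P * phiCoeff φ s Q) +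
        ↑(l + (r + s)) := by
        rw [emultiplicity_mul (prime_C_natCast p)]
        push_cast
        ring
    _ ≤ _ := by gcongr; exact emultiplicity_C_le_phiCoeff _ _ _

theorem phiWeight_mul_mul_pow_self (hφ : φ.Monic)
    (hirr : Irreducible (φ.map (Int.castRingHom (ZMod p)))) (P Q : ℤ[X]) (r s : ℕ) :
    phiWeight p k φ (phiCoeff φ r P * phiCoeff φ s Q * φ ^ (r + s)) (r + s) =
      phiWeight p k φ P r + phiWeight p k φ Q s := by
  have h := phiCoeff_add_mul_pow hφ 0 (r + s) (phiCoeff φ r P * phiCoeff φ s Q)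
  rw [zero_add, phiCoeff_apply 0, pow_zero, divByMonic_one] at h
  unfold phiWeight
  rw [h, emultiplicity_modByMonic_mul hφ hirr (degree_phiCoeff_lt hφ _ _)
    (degree_phiCoeff_lt hφ _ _)]
  push_cast
  ring

theorem IsLastMinimum.add_one_le_phiWeight_mul_mul_pow (hk : k ≠ 0) (hφ : φ.Monic)
    {P Q : ℤ[X]} {r₀ s₀ : ℕ} (hP : IsLastMinimum (phiWeight p k φ P) r₀)
    (hQ : IsLastMinimum (phiWeight p k φ Q) s₀) {r s t : ℕ} (ht : r₀ + s₀ ≤ t)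
    (hrst : (r, s) ≠ (r₀, s₀) ∨ r₀ + s₀ < t) :
    phiWeight p k φ P r₀ + phiWeight p k φ Q s₀ + 1 ≤
      phiWeight p k φ (phiCoeff φ r P * phiCoeff φ s Q * φ ^ (r + s)) t := by
  refine le_trans ?_ (phiWeight_add_le_phiWeight_mul_mul_pow hk hφ P Q r s t)
  rcases lt_or_ge (r + s) t with hlt | hge
  · have : (1 : ℕ∞) ≤ ((t - (r + s) : ℕ) : ℕ∞) := by exact_mod_cast (by omega)
    exact add_le_add (add_le_add (hP.1 _) (hQ.1 _)) this
  refine le_trans ?_ le_self_add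
  have : r₀ < r ∨ s₀ < s := by
    rcases hrst with h | h
    · by_contra! h'
      exact h (Prod.ext (by omega) (by omega))
    · omega
  rcases this with h | h
  · rw [add_right_comm]
    exact add_le_add (Order.add_one_le_of_lt (hP.2 _ h)) (hQ.1 _)
  · rw [add_assoc]
    exact add_le_add (hP.1 _) (Order.add_one_le_of_lt (hQ.2 _ h))

/-- In `P * Q = ∑ b_r c_s φ ^ (r + s)` every term has weight at least
`w₀ = phiWeight p k φ P r₀ + phiWeight p k φ Q s₀` everywhere and more than `w₀` beyond `r₀ + s₀`;
at `r₀ + s₀` only the term `(r₀, s₀)` reaches `w₀`, because `φ` is irreducible mod `p`. -/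
theorem IsLastMinimum.phiWeight_mul (hk : k ≠ 0) (hφ : φ.Monic) (hd : 0 < φ.natDegree)
    (hirr : Irreducible (φ.map (Int.castRingHom (ZMod p)))) {P Q : ℤ[X]} {r₀ s₀ : ℕ}
    (hP : IsLastMinimum (phiWeight p k φ P) r₀) (hQ : IsLastMinimum (phiWeight p k φ Q) s₀) :
    IsLastMinimum (phiWeight p k φ (P * Q)) (r₀ + s₀) := by
  set w₀ := phiWeight p k φ P r₀ + phiWeight p k φ Q s₀
  have hw₀ : w₀ < w₀ + 1 := (ENat.lt_add_one_iff (WithTop.add_ne_top.2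
    ⟨(hP.2 _ (lt_add_one r₀)).ne_top, (hQ.2 _ (lt_add_one s₀)).ne_top⟩)).2 le_rfl
  set N := P.natDegree + Q.natDegree + r₀ + s₀ + 1
  have hN (A : ℤ[X]) (hA : A.natDegree < N) : A.degree < (φ ^ N).degree :=
    degree_lt_degree (by rw [hφ.natDegree_pow]; nlinarith)
  have hexp := mul_eq_sum_phiCoeff hφ (hN P (by omega)) (hN Q (by omega))
  have hmem : (r₀, s₀) ∈ range N ×ˢ range N := by simp only [mem_product, mem_range]; omega
  have hat : phiWeight p k φ (P * Q) (r₀ + s₀) = w₀ := by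
    rw [hexp, ← add_sum_erase _ _ hmem, phiWeight_add_of_lt] <;>
      rw [phiWeight_mul_mul_pow_self hφ hirr]
    exact hw₀.trans_le (le_phiWeight_sum hk _ _ fun x hx =>
      hP.add_one_le_phiWeight_mul_mul_pow hk hφ hQ le_rfl (Or.inl (ne_of_mem_erase hx)))
  refine ⟨fun t => ?_, fun t ht => ?_⟩ <;> rw [hat, hexp]
  · exact le_phiWeight_sum hk _ _ fun x _ => (le_add_right (add_le_add (hP.1 _) (hQ.1 _))).trans
      (phiWeight_add_le_phiWeight_mul_mul_pow hk hφ P Q x.1 x.2 t)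
  · exact hw₀.trans_le (le_phiWeight_sum hk _ _ fun x _ =>
      hP.add_one_le_phiWeight_mul_mul_pow hk hφ hQ ht.le (Or.inr ht))

theorem exists_isLastMinimum_phiWeight (hφ : φ.Monic) (hd : 0 < φ.natDegree) {P : ℤ[X]}
    (hP : P ≠ 0) : ∃ r₀, IsLastMinimum (phiWeight p k φ P) r₀ := by
  refine exists_isLastMinimum (fun r => le_add_self) (r₁ := P.natDegree / φ.natDegree) ?_
  have hM : phiCoeff φ (P.natDegree / φ.natDegree) P ≠ 0 := by
    rw [← leadingCoeff_ne_zero, leadingCoeff_phiCoeff_natDegree_div hφ hd]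
    exact leadingCoeff_ne_zero.2 hP
  exact WithTop.add_ne_top.2 ⟨WithTop.mul_ne_top (WithTop.natCast_ne_top k)
    (emultiplicity_lt_top.2 (FiniteMultiplicity.of_not_isUnit (prime_C_natCast p).not_isUnit
      hM)).ne, WithTop.natCast_ne_top _⟩

theorem isLastMinimum_phiWeight_zero_of_mul (hk : k ≠ 0) (hφ : φ.Monic)
    (hd : 0 < φ.natDegree) (hirr : Irreducible (φ.map (Int.castRingHom (ZMod p))))
    {P Q : ℤ[X]} (hP : P ≠ 0) (hQ : Q ≠ 0) (h : IsLastMinimum (phiWeight p k φ (P * Q)) 0) :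
    IsLastMinimum (phiWeight p k φ P) 0 := by
  obtain ⟨r₀, hr₀⟩ := exists_isLastMinimum_phiWeight (p := p) (k := k) hφ hd hP
  obtain ⟨s₀, hs₀⟩ := exists_isLastMinimum_phiWeight (p := p) (k := k) hφ hd hQ
  have := (hr₀.phiWeight_mul hk hφ hd hirr hs₀).unique h
  rwa [show r₀ = 0 by omega] at hr₀

end PhiWeight

theorem primPart_dvd_of_map_dvd {H F : ℤ[X]} {f : ℚ[X]} {c : ℚ}
    (hF : F.map (Int.castRingHom ℚ) = C c * f) (hH : H.map (Int.castRingHom ℚ) ∣ f) :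
    H.primPart ∣ F := by
  rw [IsPrimitive.Int.dvd_iff_map_cast_dvd_map_cast _ _ (isPrimitive_primPart H), hF]
  exact ((map_dvd _ (primPart_dvd H)).trans hH).mul_left _

end Polynomial

theorem mul_padicValNat_factorial_lt {p k j : ℕ} [Fact p.Prime] (hpk : k + 2 ≤ p) (hj : j ≠ 0) :
    k * padicValNat p (j + 1).factorial < j := by
  have h := sub_one_mul_padicValNat_factorial_lt_of_ne_zero p (n := j + 1) (by omega)
  have hk := Nat.mul_le_mul_right (padicValNat p (j + 1).factorial) (show k + 1 ≤ p - 1 by omega)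
  rw [add_one_mul] at hk
  rcases Nat.eq_zero_or_pos (padicValNat p (j + 1).factorial) with h0 | _
  · rw [h0, mul_zero]
    omega
  · omega

theorem dvd_factorial_div_factorial {p m N j : ℕ} (hpm : p ∣ m) (hmN : m ≤ N) (hjm : j < m) :
    p ∣ N.factorial / j.factorial := by
  refine Nat.dvd_div_of_mul_dvd (Dvd.dvd.trans ?_ (Nat.factorial_dvd_factorial hmN))
  rw [← Nat.mul_factorial_pred (by omega : m ≠ 0), mul_comm m]
  exact mul_dvd_mul (Nat.factorial_dvd_factorial (by omega)) hpm

namespace Polynomial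

noncomputable def clearedSum (n : ℕ) (a : ℕ → ℤ[X]) (φ : ℤ[X]) : ℤ[X] :=
  ∑ j ∈ range (n + 1), C (((n + 1).factorial / (j + 1).factorial : ℕ) : ℤ) * a j * φ ^ j

section ClearedSum

variable {n : ℕ} {a : ℕ → ℤ[X]} {φ : ℤ[X]}

theorem map_clearedSum :
    (clearedSum n a φ).map (Int.castRingHom ℚ) = C ((n + 1).factorial : ℚ) *
      ∑ j ∈ range (n + 1), C ((1 : ℚ) / (j + 1).factorial) * (a j).map (Int.castRingHom ℚ) *
        φ.map (Int.castRingHom ℚ) ^ j := by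
  rw [clearedSum, Polynomial.map_sum, mul_sum]
  refine sum_congr rfl fun j hj => ?_
  rw [Polynomial.map_mul, Polynomial.map_mul, Polynomial.map_pow, map_C, ← mul_assoc,
    ← mul_assoc, ← C_mul, eq_intCast, Int.cast_natCast, Nat.cast_div (Nat.factorial_dvd_factorial
      (by simp at hj; omega)) (by positivity), div_eq_mul_one_div]

theorem phiCoeff_clearedSum (hφ : φ.Monic) (hdeg : ∀ j ≤ n, (a j).degree < φ.degree) (j : ℕ) :
    phiCoeff φ j (clearedSum n a φ) =
      if j ≤ n then C (((n + 1).factorial / (j + 1).factorial : ℕ) : ℤ) * a j else 0 := by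
  rw [clearedSum, phiCoeff_sum_mul_pow hφ fun i hi => ?_]
  · simp only [mem_range, Nat.lt_succ_iff]
  rw [C_mul']
  exact (degree_smul_le _ _).trans_lt (hdeg i (by simp at hi; omega))

theorem natDegree_clearedSum_div (hφ : φ.Monic) (hd : 0 < φ.natDegree)
    (hdeg : ∀ j ≤ n, (a j).degree < φ.degree) (han : a n ≠ 0) :
    (clearedSum n a φ).natDegree / φ.natDegree = n := by
  refine natDegree_div_eq_of_phiCoeff hφ hd ?_ fun r hr => ?_
  · rwa [phiCoeff_clearedSum hφ hdeg, if_pos le_rfl, Nat.div_self (Nat.factorial_pos _),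
      Nat.cast_one, C_1, one_mul]
  · rw [phiCoeff_clearedSum hφ hdeg, if_neg (not_le.2 hr)]

theorem leadingCoeff_clearedSum (hφ : φ.Monic) (hd : 0 < φ.natDegree)
    (hdeg : ∀ j ≤ n, (a j).degree < φ.degree) (han : a n ≠ 0) :
    (clearedSum n a φ).leadingCoeff = (a n).leadingCoeff := by
  rw [← leadingCoeff_phiCoeff_natDegree_div hφ hd, natDegree_clearedSum_div hφ hd hdeg han,
    phiCoeff_clearedSum hφ hdeg, if_pos le_rfl, Nat.div_self (Nat.factorial_pos _),
    Nat.cast_one, C_1, one_mul]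

theorem pow_dvd_map_clearedSum {p m : ℕ} (hpm : p ∣ m) (hmn : m ≤ n + 1) :
    φ.map (Int.castRingHom (ZMod p)) ^ (m - 1) ∣
      (clearedSum n a φ).map (Int.castRingHom (ZMod p)) := by
  rw [clearedSum, Polynomial.map_sum]
  refine dvd_sum fun j hj => ?_
  rw [Polynomial.map_mul, Polynomial.map_mul, Polynomial.map_pow]
  rcases lt_or_ge j (m - 1) with hjm | hjm
  · rw [map_C, eq_intCast, Int.cast_natCast, (ZMod.natCast_eq_zero_iff _ p).2
      (dvd_factorial_div_factorial hpm hmn (by omega)), C_0, zero_mul, zero_mul]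
    exact dvd_zero _
  · exact dvd_mul_of_dvd_right (pow_dvd_pow _ hjm) _

theorem isLastMinimum_phiWeight_clearedSum {p k : ℕ} [Fact p.Prime] (hk : k ≠ 0)
    (hpk : k + 2 ≤ p) (hφ : φ.Monic) (hdeg : ∀ j ≤ n, (a j).degree < φ.degree)
    (hcont : ¬ (p : ℤ) ∣ (a 0).content) :
    IsLastMinimum (phiWeight p k φ (clearedSum n a φ)) 0 := by
  set c : ℕ → ℕ := fun j => (n + 1).factorial / (j + 1).factorial
  have hc (j : ℕ) (hj : j ≤ n) : c j * (j + 1).factorial = (n + 1).factorial :=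
    Nat.div_mul_cancel (Nat.factorial_dvd_factorial (by omega))
  have hc0 (j : ℕ) (hj : j ≤ n) : c j ≠ 0 := fun h0 =>
    Nat.factorial_ne_zero (n + 1) (by rw [← hc j hj, h0, zero_mul])
  have hW (j : ℕ) (hj : j ≤ n) : phiWeight p k φ (clearedSum n a φ) j =
      k * (padicValNat p (c j) + emultiplicity (C (p : ℤ)) (a j)) + j := by
    rw [phiWeight, phiCoeff_clearedSum hφ hdeg, if_pos hj, emultiplicity_mul (prime_C_natCast p),
      emultiplicity_C_natCast p (hc0 j hj)]
  have hW0 : phiWeight p k φ (clearedSum n a φ) 0 = (k * padicValNat p (c 0) : ℕ) := by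
    rw [hW 0 n.zero_le, emultiplicity_eq_zero.2 (dvd_content_iff_C_dvd.not.1 hcont)]
    push_cast
    ring
  suffices h : ∀ j, 0 < j →
      phiWeight p k φ (clearedSum n a φ) 0 < phiWeight p k φ (clearedSum n a φ) j from
    ⟨fun j => (Nat.eq_zero_or_pos j).elim (fun h0 => h0 ▸ le_rfl) fun hj => (h j hj).le, h⟩
  intro j hj
  rcases le_or_gt j n with hjn | hjn
  · have hval : padicValNat p (c 0) =
        padicValNat p (c j) + padicValNat p (j + 1).factorial := by
      rw [← padicValNat.mul (hc0 j hjn) (Nat.factorial_pos _).ne', hc j hjn, ← hc 0 n.zero_le]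
      simp
    have := mul_padicValNat_factorial_lt hpk hj.ne'
    rw [hW0, hW j hjn, hval]
    calc ((k * (padicValNat p (c j) + padicValNat p (j + 1).factorial) : ℕ) : ℕ∞)
        < (k * padicValNat p (c j) + j : ℕ) := by push_cast [mul_add]; exact_mod_cast (by omega)
      _ ≤ _ := by push_cast; gcongr; exact le_self_add
  · rw [hW0, phiWeight_eq_top hk (by rw [phiCoeff_clearedSum hφ hdeg, if_neg (not_le.2 hjn)])]
    exact WithTop.coe_lt_top _

theorem map_dvd_map_of_clearedSum_eq_mul {p k m : ℕ} [Fact p.Prime] (hφ : φ.Monic)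
    (hd : 0 < φ.natDegree) (hirr : Irreducible (φ.map (Int.castRingHom (ZMod p))))
    (hdeg : ∀ j ≤ n, (a j).degree < φ.degree) (hlead : ¬ (p : ℤ) ∣ (a n).leadingCoeff)
    (hpm : p ∣ m) (hmn : m ≤ n + 1) (hkm : n + 2 ≤ m + k) {H G : ℤ[X]}
    (hHG : clearedSum n a φ = H * G) (hH : k * φ.natDegree ≤ H.natDegree) :
    φ.map (Int.castRingHom (ZMod p)) ∣ H.map (Int.castRingHom (ZMod p)) := by
  have han : a n ≠ 0 := by rintro h0; exact hlead (by simp [h0])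
  have hF : (H * G).map (Int.castRingHom (ZMod p)) ≠ 0 := by
    rw [← hHG, Ne, ← C_dvd_iff_zmod]
    exact not_C_dvd_of_not_dvd_leadingCoeff (by rwa [leadingCoeff_clearedSum hφ hd hdeg han])
  rw [Polynomial.map_mul] at hF
  have hFdeg : (H * G).natDegree < (n + 1) * φ.natDegree := by
    rw [← hHG, ← Nat.div_lt_iff_lt_mul hd, natDegree_clearedSum_div hφ hd hdeg han]
    exact n.lt_succ_self
  have hG : G ≠ 0 := by rintro rfl; exact hF (by simp)
  have hH0 : H ≠ 0 := by rintro rfl; exact hF (by simp)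
  rw [natDegree_mul hH0 hG] at hFdeg
  have : (n + 1) * φ.natDegree ≤ (m - 1) * φ.natDegree + k * φ.natDegree := by
    rw [← add_mul]; exact Nat.mul_le_mul_right _ (by omega)
  refine dvd_of_pow_dvd_mul_of_natDegree_lt hirr.prime (e := m - 1) ?_ (right_ne_zero_of_mul hF)
    (by rw [hφ.natDegree_map]; exact natDegree_map_le.trans_lt (by omega))
  rw [← Polynomial.map_mul, ← hHG]
  exact pow_dvd_map_clearedSum hpm hmn

end ClearedSum

end Polynomial

theorem no_factor_in_interval (n : ℕ) (φ : Polynomial ℤ) (hmonic : φ.Monic)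
    (hirr : ∀ p : ℕ, p.Prime → p ≤ n + 1 →
      Irreducible (φ.map (Int.castRingHom (ZMod p))))
    (a : ℕ → Polynomial ℤ) (hdeg : ∀ j ≤ n, (a j).degree < φ.degree)
    (hcont : ∀ q : ℕ, q.Prime → q ≤ n + 1 → ¬ ((q : ℤ) ∣ (a 0).content))
    (k : ℕ) (hk : 1 ≤ k) (hkn : k ≤ n / 2)
    (p : ℕ) (hp : p.Prime) (hpk : k + 2 ≤ p)
    (hdvd : p ∣ ∏ i ∈ Finset.range k, (n + 1 - i))
    (hlead : ¬ ((p : ℤ) ∣ (a n).leadingCoeff)) :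
    ¬ ∃ h : Polynomial ℤ,
        (∃ g : Polynomial ℚ,
          ∑ j ∈ Finset.range (n + 1),
            C ((1 : ℚ) / (j + 1).factorial) * ((a j).map (Int.castRingHom ℚ)) *
              (φ.map (Int.castRingHom ℚ)) ^ j
          = (h.map (Int.castRingHom ℚ)) * g) ∧
        k * φ.natDegree ≤ h.natDegree ∧ h.natDegree < (k + 1) * φ.natDegree := by
  have := Fact.mk hp
  rintro ⟨h, ⟨g, hfg⟩, hkh, hhk⟩
  obtain ⟨i, hik, hpi⟩ := (Prime.dvd_finsetProd_iff hp.prime _).1 hdvd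
  rw [Finset.mem_range] at hik
  have hpn : p ≤ n + 1 := (Nat.le_of_dvd (by omega) hpi).trans (Nat.sub_le _ _)
  have hirrp := hirr p hp hpn
  have hd : 0 < φ.natDegree := hmonic.natDegree_map (Int.castRingHom (ZMod p)) ▸ hirrp.natDegree_pos
  have han : a n ≠ 0 := by rintro h0; exact hlead (by simp [h0])
  obtain ⟨G, hFG⟩ := primPart_dvd_of_map_dvd (map_clearedSum (n := n) (a := a) (φ := φ))
    (hfg ▸ dvd_mul_right _ g)
  have hG : G ≠ 0 := by
    refine right_ne_zero_of_mul (a := h.primPart) (leadingCoeff_ne_zero.1 ?_)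
    rwa [← hFG, leadingCoeff_clearedSum hmonic hd hdeg han, leadingCoeff_ne_zero]
  have hHlead : ¬ (p : ℤ) ∣ h.primPart.leadingCoeff := fun hdl =>
    hlead (by rw [← leadingCoeff_clearedSum hmonic hd hdeg han, hFG, leadingCoeff_mul]
              exact dvd_mul_of_dvd_left hdl _)
  rw [← natDegree_primPart h] at hkh hhk
  have hmin := isLastMinimum_phiWeight_zero_of_mul (by omega) hmonic hd hirrp (primPart_ne_zero h)
    hG (hFG ▸ isLastMinimum_phiWeight_clearedSum (by omega) hpk hmonic hdeg (hcont p hp hpn))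
  exact (hmin.2 k (by omega)).not_ge (phiWeight_le_phiWeight_zero hmonic hd hkh hhk
    (map_dvd_map_of_clearedSum_eq_mul hmonic hd hirrp hdeg hlead hpi (by omega) (by omega) hFG hkh)
    hHlead)
end
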